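/- arXiv:2105.03195 — 3 statements merged into one kernel-verified Lean document; each statement's English description precedes it below -/
import Mathlib

section
/- Fix degree statistics n = (n(c), c ≥ 0) with Σ_{c≥0} n(c) = n and Σ_{c≥0} c·n(c) = n − 1. Let d = (d_0,...,d_{k−1}) be a sequence of non-negative integers with w(d,c) = |{0 ≤ i ≤ k−1 : d_i = c}| ≤ n(c) for all c ≥ 0. If (T,V) is a uniformly random element of 𝒯_n^•, then P((deg_T(V^0),...,deg_T(V^{k−1})) = d and |V| ≥ k) = (1/(n)_k) · ∏_{i=0}^{k−1} d_i · ∏_{c≥0} (n(c))_{w(d,c)}, where (m)_b = m(m−1)···(m−b+1) denotes the falling factorial. -/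
open scoped ENNReal NNReal BigOperators
open MeasureTheory ProbabilityTheory

/-- A plane tree: a finite rooted tree with ordered children. -/
inductive PlaneTree : Type where
  | node : List PlaneTree → PlaneTree

namespace PlaneTree

/-- The list of root subtrees of a plane tree. -/
def children : PlaneTree → List PlaneTree
  | node l => l

/-- The number of vertices of a plane tree. -/
def size : PlaneTree → ℕ
  | node l => 1 + (l.attach.map fun c => size c.1).sum
decreasing_by
  simp only [node.sizeOf_spec]
  have := List.sizeOf_lt_of_mem c.2
  omega

/-- The height of a plane tree: the maximal graph distance from the root to a vertex. -/
def height : PlaneTree → ℕ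
  | node l => (l.attach.map fun c => height c.1 + 1).foldr max 0
decreasing_by
  simp only [node.sizeOf_spec]
  have := List.sizeOf_lt_of_mem c.2
  omega

/-- The number of vertices of a plane tree at distance `k` from the root. -/
def levelCount : PlaneTree → ℕ → ℕ
  | _, 0 => 1
  | node l, k + 1 => (l.attach.map fun c => levelCount c.1 k).sum
termination_by t _ => sizeOf t
decreasing_by
  simp only [node.sizeOf_spec]
  have := List.sizeOf_lt_of_mem c.2
  omega

/-- The width of a plane tree: the maximal number of vertices on a single level. -/
def width (t : PlaneTree) : ℕ :=
  (Finset.range (t.height + 1)).sup t.levelCount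

/-- The number of vertices of a plane tree having exactly `c` children. -/
def degCount : PlaneTree → ℕ → ℕ
  | node l, c => (if l.length = c then 1 else 0) + (l.attach.map fun s => degCount s.1 c).sum
termination_by t _ => sizeOf t
decreasing_by
  simp only [node.sizeOf_spec]
  have := List.sizeOf_lt_of_mem s.2
  omega

/-- The sum over all vertices `v` of `(deg v)^2`, i.e. `|n_t|_2^2`. -/
def sumDegSq : PlaneTree → ℕ
  | node l => l.length ^ 2 + (l.attach.map fun c => sumDegSq c.1).sum
decreasing_by
  simp only [node.sizeOf_spec]
  have := List.sizeOf_lt_of_mem c.2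
  omega

/-- The subtree of a plane tree rooted at the vertex reached by following the path `p`
(at each step, `i` means "move to the `i`-th child"), if that vertex exists. -/
def subtreeAt : List ℕ → PlaneTree → Option PlaneTree
  | [], t => some t
  | i :: p, node l => (l[i]?).bind (subtreeAt p)

/-- `v : List ℕ` encodes a vertex of the plane tree `t` (the root is `[]`, and the height of
a vertex is the length of its path). -/
def IsVertex (t : PlaneTree) (v : List ℕ) : Prop :=
  subtreeAt v t ≠ none

/-- The number of children of the vertex `v` of `t` (junk value `0` if `v` is not a vertex). -/
def degAt (t : PlaneTree) (v : List ℕ) : ℕ :=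
  match subtreeAt v t with
  | some s => s.children.length
  | none => 0

end PlaneTree

/-- `n` is the degree statistics sequence of some plane tree: `Σ_c n(c) = 1 + Σ_c c·n(c)`. -/
def IsDegStats (n : ℕ →₀ ℕ) : Prop :=
  n.sum (fun _ m => m) = 1 + n.sum (fun c m => c * m)

/-- `|n|_1 = Σ_c c·n(c)`. -/
def dsNorm1 (n : ℕ →₀ ℕ) : ℕ := n.sum fun c m => c * m

/-- `|n|_2² = Σ_c c²·n(c)`. -/
def dsNorm2Sq (n : ℕ →₀ ℕ) : ℕ := n.sum fun c m => c ^ 2 * m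

/-- The set `𝒯_n^•` of marked plane trees `(t,v)` with degree statistics `n`. -/
def markedTrees (n : ℕ →₀ ℕ) : Set (PlaneTree × List ℕ) :=
  {tv | (∀ c, tv.1.degCount c = n c) ∧ tv.1.IsVertex tv.2}

/-!
Deleting the root of the first tree of a forest of `r + 1` trees whose first root has `c` children
leaves a forest of `r + c` trees, and `PlaneTree.graft` undoes this. Applied to forests with a
marked vertex in a given tree (descending into that tree when it is the first one), the deletion
gives a recursion on the number of vertices `M` for the number `S` of marked forests whose marked
vertex has ancestors of degrees `d 0, …, d (k - 1)`. Its solution is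
`S · ∏_c m(c)! = ∏_{i<k} d i · (M - k)! · ∏_c (m(c))_{w(d,c)}`, independently of the number of
trees and of the marked tree. For one tree and `k = 0` this says `|𝒯_n^•| = N! / ∏_c n(c)!`, and
the theorem is the quotient of the two counts.
-/

open scoped Nat

lemma Set.encard_biUnion_image {ι α β : Type*} (s : Finset ι) (A : ι → Set α) (f : ι → α → β)
    (hf : ∀ i ∈ s, ∀ j ∈ s, ∀ a ∈ A i, ∀ b ∈ A j, f i a = f j b → i = j ∧ a = b) :
    (⋃ i ∈ s, f i '' A i).encard = ∑ i ∈ s, (A i).encard := by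
  have hdisj : (s : Set ι).PairwiseDisjoint fun i => f i '' A i := by
    intro i hi j hj hij
    refine Set.disjoint_left.2 ?_
    rintro _ ⟨a, ha, rfl⟩ ⟨b, hb, hba⟩
    exact hij (hf j hj i hi b hb a ha hba).1.symm
  have := s.finite_toSet.encard_biUnion hdisj
  rw [finsum_mem_coe_finset] at this
  simp only [Finset.mem_coe] at this
  rw [this]
  exact Finset.sum_congr rfl fun i hi =>
    Set.InjOn.encard_image fun a ha b hb hab => (hf i hi i hi a ha b hb hab).2

lemma Set.ncard_mul_eq_of_encard_mul_eq {α : Type*} {s : Set α} {a b : ℕ} (ha : a ≠ 0)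
    (h : s.encard * a = b) : s.ncard * a = b := by
  have hfin : s.Finite := Set.encard_ne_top_iff.1 fun htop => by
    rw [htop, ENat.top_mul (by exact_mod_cast ha)] at h
    exact ENat.top_ne_natCast _ h
  rw [← hfin.cast_ncard_eq] at h
  exact_mod_cast h

lemma Finset.mul_prod_eq_mul_prod_of_eq_off {ι M : Type*} [CommMonoid M] [DecidableEq ι]
    {s : Finset ι} {a : ι} (ha : a ∈ s) {f g : ι → M} {x y : M}
    (hfg : ∀ b ∈ s, b ≠ a → f b = g b) (h : x * f a = y * g a) :
    x * ∏ b ∈ s, f b = y * ∏ b ∈ s, g b := by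
  rw [← Finset.mul_prod_erase s f ha, ← Finset.mul_prod_erase s g ha, ← mul_assoc, ← mul_assoc, h,
    Finset.prod_congr rfl fun b hb =>
      hfg b (Finset.mem_of_mem_erase hb) (Finset.ne_of_mem_erase hb)]

section DegreeStatistics

variable {m : ℕ →₀ ℕ} {c : ℕ}

lemma Finsupp.sub_single_one_apply_of_ne {c' : ℕ} (h : c' ≠ c) :
    (m - Finsupp.single c 1 : ℕ →₀ ℕ) c' = m c' := by
  simp [Finsupp.single_eq_of_ne h]

lemma Finsupp.degree_sub_single_one (hc : m c ≠ 0) :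
    (m - Finsupp.single c 1).degree + 1 = m.degree := by
  conv_rhs => rw [← Finsupp.sub_add_single_one_cancel hc]
  rw [map_add, Finsupp.degree_single]

lemma dsNorm1_sub_single_one (hc : m c ≠ 0) : dsNorm1 (m - Finsupp.single c 1) + c = dsNorm1 m := by
  conv_rhs => rw [← Finsupp.sub_add_single_one_cancel hc]
  rw [dsNorm1, dsNorm1, Finsupp.sum_add_index' (by simp) (fun _ _ _ => by ring),
    Finsupp.sum_single_index (by simp), mul_one]

lemma sum_support_mul_add_eq (m : ℕ →₀ ℕ) (r : ℕ) :
    ∑ c ∈ m.support, m c * (r + c) = r * m.degree + dsNorm1 m := by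
  rw [Finsupp.degree_apply, dsNorm1, Finsupp.sum, Finset.mul_sum, ← Finset.sum_add_distrib]
  exact Finset.sum_congr rfl fun c _ => by ring

lemma sum_support_mul_add_mul_factorial {M r : ℕ} (hM : m.degree = M + 1)
    (hr : dsNorm1 m + (r + 1) = M + 1) (hM0 : M ≠ 0) :
    ∑ c ∈ m.support, m c * ((r + c) * (M - 1)!) = (r + 1) * M ! :=
  calc _ = (∑ c ∈ m.support, m c * (r + c)) * (M - 1)! := by
        rw [Finset.sum_mul]
        exact Finset.sum_congr rfl fun c _ => (mul_assoc _ _ _).symm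
    _ = (r + 1) * (M * (M - 1)!) := by
        rw [sum_support_mul_add_eq, hM]
        linear_combination (M - 1)! * hr
    _ = (r + 1) * M ! := by rw [Nat.mul_factorial_pred hM0]

def factorialProd (m : ℕ →₀ ℕ) : ℕ := m.prod fun _ x => x !

lemma factorialProd_ne_zero (m : ℕ →₀ ℕ) : factorialProd m ≠ 0 :=
  Finset.prod_ne_zero_iff.2 fun _ _ => Nat.factorial_ne_zero _

lemma factorialProd_eq (hc : m c ≠ 0) :
    factorialProd m = m c * factorialProd (m - Finsupp.single c 1) := by
  rw [factorialProd, factorialProd,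
    Finsupp.prod_of_support_subset _ Finsupp.support_tsub _ fun _ _ => Nat.factorial_zero,
    ← one_mul (m.prod _)]
  refine Finset.mul_prod_eq_mul_prod_of_eq_off (Finsupp.mem_support_iff.2 hc)
    (fun b _ hb => by rw [Finsupp.sub_single_one_apply_of_ne hb]) ?_
  rw [one_mul, Finsupp.tsub_apply, Finsupp.single_eq_same, Nat.mul_factorial_pred hc]

lemma mul_factorialProd_eq (x : ℕ∞) (hc : m c ≠ 0) :
    x * factorialProd m = m c * (x * factorialProd (m - Finsupp.single c 1)) := by
  rw [factorialProd_eq hc, Nat.cast_mul, mul_left_comm]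

end DegreeStatistics

section SpineSequence

def seqCount (k : ℕ) (d : ℕ → ℕ) (c : ℕ) : ℕ := ((Finset.range k).filter fun i => d i = c).card

/-- `∏_{c ∈ C} (m(c))_{w(d,c)}`. It vanishes as soon as some `c ∈ C` occurs more than `m c` times
among `d 0, …, d (k - 1)`, which is what lets the spine count hold without side conditions. -/
def fallingProd (C : Finset ℕ) (m : ℕ →₀ ℕ) (k : ℕ) (d : ℕ → ℕ) : ℕ :=
  ∏ c ∈ C, (m c).descFactorial (seqCount k d c)

variable {C : Finset ℕ} {k : ℕ} {d : ℕ → ℕ} {m : ℕ →₀ ℕ}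

lemma seqCount_succ (c : ℕ) :
    seqCount (k + 1) d c = seqCount k (fun i => d (i + 1)) c + if d 0 = c then 1 else 0 := by
  simp only [seqCount, Finset.card_filter, Finset.sum_range_succ']

lemma seqCount_pos {i : ℕ} (hi : i < k) : 0 < seqCount k d (d i) :=
  Finset.card_pos.2 ⟨i, by simp [hi]⟩

lemma seqCount_eq_zero (hC : ∀ i < k, d i ∈ C) {c : ℕ} (hc : c ∉ C) : seqCount k d c = 0 :=
  Finset.card_eq_zero.2 <| Finset.filter_eq_empty_iff.2 fun i hi h =>
    hc (h ▸ hC i (Finset.mem_range.1 hi))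

lemma sum_seqCount_mul (hC : ∀ i < k, d i ∈ C) (f : ℕ → ℕ) :
    ∑ c ∈ C, seqCount k d c * f c = ∑ i ∈ Finset.range k, f (d i) := by
  rw [← Finset.sum_fiberwise_of_maps_to (g := d) (t := C) fun i hi => hC i (Finset.mem_range.1 hi)]
  refine Finset.sum_congr rfl fun c _ => ?_
  rw [seqCount, ← smul_eq_mul, ← Finset.sum_const]
  exact Finset.sum_congr rfl fun i hi => by rw [(Finset.mem_filter.1 hi).2]

lemma mem_support_of_seqCount_le (hle : ∀ c, seqCount k d c ≤ m c) : ∀ i < k, d i ∈ m.support :=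
  fun _ hi => Finsupp.mem_support_iff.2 (Nat.pos_iff_ne_zero.1 ((seqCount_pos hi).trans_le (hle _)))

lemma sum_support_sub_seqCount (hle : ∀ c, seqCount k d c ≤ m c) :
    ∑ c ∈ m.support, (m c - seqCount k d c) = m.degree - k := by
  have hk := sum_seqCount_mul (mem_support_of_seqCount_le hle) fun _ => 1
  simp only [mul_one, Finset.sum_const, Finset.card_range, smul_eq_mul] at hk
  rw [Finset.sum_tsub_distrib _ fun c _ => hle c, hk, Finsupp.degree_apply]

lemma le_degree_of_seqCount_le (hle : ∀ c, seqCount k d c ≤ m c) : k ≤ m.degree := by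
  have hk := sum_seqCount_mul (mem_support_of_seqCount_le hle) fun _ => 1
  simp only [mul_one, Finset.sum_const, Finset.card_range, smul_eq_mul] at hk
  rw [← hk, Finsupp.degree_apply]
  exact Finset.sum_le_sum fun c _ => hle c

lemma le_dsNorm1_of_seqCount_le (hle : ∀ c, seqCount k d c ≤ m c) (hd : ∀ i < k, d i ≠ 0) :
    k ≤ dsNorm1 m :=
  calc k = ∑ i ∈ Finset.range k, 1 := by simp
    _ ≤ ∑ i ∈ Finset.range k, d i :=
      Finset.sum_le_sum fun i hi => Nat.one_le_iff_ne_zero.2 (hd i (Finset.mem_range.1 hi))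
    _ = ∑ c ∈ m.support, seqCount k d c * c :=
      (sum_seqCount_mul (mem_support_of_seqCount_le hle) id).symm
    _ ≤ ∑ c ∈ m.support, m c * c := Finset.sum_le_sum fun c _ => Nat.mul_le_mul_right _ (hle c)
    _ = dsNorm1 m := Finset.sum_congr rfl fun c _ => mul_comm _ _

lemma le_of_fallingProd_ne_zero (hC : ∀ i < k, d i ∈ C) (h : fallingProd C m k d ≠ 0) (c : ℕ) :
    seqCount k d c ≤ m c := by
  by_cases hc : c ∈ C
  · exact not_lt.1 fun hlt => h (Finset.prod_eq_zero hc (Nat.descFactorial_eq_zero_iff_lt.2 hlt))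
  · simp [seqCount_eq_zero hC hc]

lemma mul_fallingProd_sub_single (hC : ∀ i < k, d i ∈ C) {c : ℕ} (hc : m c ≠ 0) :
    m c * fallingProd C (m - Finsupp.single c 1) k d =
      (m c - seqCount k d c) * fallingProd C m k d := by
  by_cases hcC : c ∈ C
  · refine Finset.mul_prod_eq_mul_prod_of_eq_off hcC
      (fun b _ hb => by rw [Finsupp.sub_single_one_apply_of_ne hb]) ?_
    obtain ⟨a, ha⟩ := Nat.exists_eq_succ_of_ne_zero hc
    rw [Finsupp.tsub_apply, Finsupp.single_eq_same, ha, ← Nat.descFactorial_succ,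
      Nat.succ_descFactorial_succ, Nat.succ_sub_one]
  · rw [seqCount_eq_zero hC hcC, Nat.sub_zero]
    exact congrArg _ <| Finset.prod_congr rfl fun b hb => by
      rw [Finsupp.sub_single_one_apply_of_ne (ne_of_mem_of_not_mem hb hcC)]

lemma fallingProd_succ (hd : d 0 ∈ C) (hm : m (d 0) ≠ 0) :
    fallingProd C m (k + 1) d =
      m (d 0) * fallingProd C (m - Finsupp.single (d 0) 1) k (fun i => d (i + 1)) := by
  rw [fallingProd, ← one_mul (∏ c ∈ C, _)]
  refine Finset.mul_prod_eq_mul_prod_of_eq_off hd (fun b _ hb => ?_) ?_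
  · rw [seqCount_succ, if_neg (Ne.symm hb), add_zero, Finsupp.sub_single_one_apply_of_ne hb]
  · obtain ⟨a, ha⟩ := Nat.exists_eq_succ_of_ne_zero hm
    rw [seqCount_succ, if_pos rfl, one_mul, Finsupp.tsub_apply, Finsupp.single_eq_same, ha,
      Nat.succ_descFactorial_succ, Nat.succ_sub_one]

lemma fallingProd_succ_of_eq_zero (hd : d 0 ∈ C) (hm : m (d 0) = 0) :
    fallingProd C m (k + 1) d = 0 :=
  Finset.prod_eq_zero hd <| by
    rw [hm, Nat.descFactorial_eq_zero_iff_lt, seqCount_succ, if_pos rfl]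
    omega

end SpineSequence

namespace PlaneTree

def forestDegCount (l : List PlaneTree) (c : ℕ) : ℕ := (l.map (degCount · c)).sum

@[simp] lemma forestDegCount_nil (c : ℕ) : forestDegCount [] c = 0 := rfl

@[simp] lemma forestDegCount_cons (t : PlaneTree) (l : List PlaneTree) (c : ℕ) :
    forestDegCount (t :: l) c = degCount t c + forestDegCount l c := rfl

@[simp] lemma forestDegCount_append (l₁ l₂ : List PlaneTree) (c : ℕ) :
    forestDegCount (l₁ ++ l₂) c = forestDegCount l₁ c + forestDegCount l₂ c := by
  simp [forestDegCount]

lemma degCount_node (l : List PlaneTree) (c : ℕ) :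
    degCount (node l) c = Finsupp.single l.length 1 c + forestDegCount l c := by
  rw [degCount, List.attach_map_val (f := (degCount · c)), Finsupp.single_apply]
  rfl

lemma forestDegCount_node_cons (g rest : List PlaneTree) (c : ℕ) :
    forestDegCount (node g :: rest) c =
      forestDegCount (g ++ rest) c + Finsupp.single g.length 1 c := by
  simp only [forestDegCount_cons, degCount_node, forestDegCount_append]
  ring

def forests (r : ℕ) (m : ℕ →₀ ℕ) : Set (List PlaneTree) :=
  {l | l.length = r ∧ ∀ c, forestDegCount l c = m c}

def graft (c : ℕ) (l : List PlaneTree) : List PlaneTree := node (l.take c) :: l.drop c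

section Forests

variable {r c : ℕ} {m : ℕ →₀ ℕ}

@[simp] lemma graft_length_append (g rest : List PlaneTree) :
    graft g.length (g ++ rest) = node g :: rest := by
  simp [graft]

lemma graft_inj {c' : ℕ} {l l' : List PlaneTree} (hc : c ≤ l.length) (hc' : c' ≤ l'.length)
    (h : graft c l = graft c' l') : c = c' ∧ l = l' := by
  simp only [graft, List.cons.injEq, node.injEq] at h
  obtain rfl : c = c' := by simpa [List.length_take, hc, hc'] using congrArg List.length h.1
  exact ⟨rfl, by rw [← List.take_append_drop c l, ← List.take_append_drop c l', h.1, h.2]⟩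

lemma graft_inj_of_mem {c' r' : ℕ} {m' : ℕ →₀ ℕ} {l l' : List PlaneTree}
    (hl : l ∈ forests (r + c) m) (hl' : l' ∈ forests (r' + c') m')
    (h : graft c l = graft c' l') : c = c' ∧ l = l' :=
  graft_inj (by rw [hl.1]; omega) (by rw [hl'.1]; omega) h

lemma graft_mem_forests {l : List PlaneTree} (hc : m c ≠ 0)
    (hl : l ∈ forests (r + c) (m - Finsupp.single c 1)) : graft c l ∈ forests (r + 1) m := by
  obtain ⟨hlen, hdeg⟩ := hl
  have hcl : (l.take c).length = c := by simp [hlen]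
  refine ⟨by simp [graft, hlen], fun c' => ?_⟩
  rw [graft, forestDegCount_node_cons, List.take_append_drop, hdeg, hcl, Finsupp.tsub_apply]
  refine Nat.sub_add_cancel ?_
  rw [Finsupp.single_apply]
  split_ifs with h
  · exact h ▸ Nat.one_le_iff_ne_zero.2 hc
  · exact Nat.zero_le _

lemma mem_forests_succ_iff {l : List PlaneTree} :
    l ∈ forests (r + 1) m ↔
      ∃ c ∈ m.support, ∃ l' ∈ forests (r + c) (m - Finsupp.single c 1), graft c l' = l := by
  refine ⟨fun ⟨hlen, hdeg⟩ => ?_, ?_⟩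
  · obtain ⟨⟨g⟩, rest, rfl⟩ := List.exists_cons_of_length_eq_add_one hlen
    have hdeg' := fun c => (forestDegCount_node_cons g rest c).symm.trans (hdeg c)
    refine ⟨g.length, ?_, g ++ rest, ⟨?_, fun c => ?_⟩, graft_length_append g rest⟩
    · have := hdeg' g.length
      simp only [Finsupp.single_eq_same] at this
      simp only [Finsupp.mem_support_iff]
      omega
    · simp only [List.length_cons] at hlen
      simp
      omega
    · rw [Finsupp.tsub_apply, ← hdeg' c]
      omega
  · rintro ⟨c, hc, l', hl', rfl⟩
    exact graft_mem_forests (Finsupp.mem_support_iff.1 hc) hl'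

lemma forests_succ :
    forests (r + 1) m = ⋃ c ∈ m.support, graft c '' forests (r + c) (m - Finsupp.single c 1) := by
  ext l
  simp [mem_forests_succ_iff]

lemma encard_forests_zero (m : ℕ →₀ ℕ) : (forests 0 m).encard = if m = 0 then 1 else 0 := by
  have : forests 0 m = {l | l = [] ∧ m = 0} := by
    ext l
    simp only [forests, List.length_eq_zero_iff, Set.mem_ofPred_eq]
    constructor
    · rintro ⟨rfl, h⟩
      exact ⟨rfl, Finsupp.ext fun c => (h c).symm⟩
    · rintro ⟨rfl, rfl⟩
      exact ⟨rfl, fun _ => rfl⟩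
  rw [this]
  split_ifs with hm <;> simp [hm]

end Forests

theorem encard_forests_mul (M : ℕ) : ∀ {r : ℕ} {m : ℕ →₀ ℕ}, m.degree = M → dsNorm1 m + r = M →
    (forests r m).encard * factorialProd m = if M = 0 then 1 else ((r * (M - 1)! : ℕ) : ℕ∞) := by
  induction M using Nat.strong_induction_on with
  | _ M ih =>
  rintro (_ | r) m hM hr
  · rw [encard_forests_zero]
    by_cases hm : m = 0
    · subst hm
      simp [← hM, factorialProd]
    · simp [hm, ← hM, (Finsupp.degree_eq_zero_iff m).not.2 hm]
  have hpiece : ∀ c ∈ m.support,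
      (forests (r + c) (m - Finsupp.single c 1)).encard * factorialProd m =
        m c * if M - 1 = 0 then 1 else (((r + c) * (M - 1 - 1)! : ℕ) : ℕ∞) := fun c hc => by
    have hc' := Finsupp.mem_support_iff.1 hc
    rw [mul_factorialProd_eq _ hc', ih (M - 1) (by omega)]
    · have := Finsupp.degree_sub_single_one hc'
      omega
    · have := dsNorm1_sub_single_one hc'
      omega
  rw [forests_succ, Set.encard_biUnion_image, Finset.sum_mul, Finset.sum_congr rfl hpiece,
    if_neg (by omega)]
  · rcases eq_or_ne M 1 with rfl | hM1
    · obtain rfl : r = 0 := by omega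
      simp only [tsub_self, if_true, mul_one]
      rw [← Nat.cast_sum, ← Finsupp.degree_apply, hM]
      simp
    · simp only [if_neg (show M - 1 ≠ 0 by omega)]
      norm_cast
      obtain ⟨M, rfl⟩ := Nat.exists_eq_add_one_of_ne_zero (show M ≠ 0 by omega)
      simpa only [Nat.add_sub_cancel] using sum_support_mul_add_mul_factorial hM hr (by omega)
  · rintro c - c' - l hl l' hl' h
    exact graft_inj_of_mem hl hl' h

def IsSpine (t : PlaneTree) (k : ℕ) (d : ℕ → ℕ) (v : List ℕ) : Prop :=
  t.IsVertex v ∧ k ≤ v.length ∧ ∀ i < k, t.degAt (v.take i) = d i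

def spinedForests (k : ℕ) (d : ℕ → ℕ) (r : ℕ) (m : ℕ →₀ ℕ) (s : ℕ) :
    Set (List PlaneTree × List ℕ) :=
  {lv | lv.1 ∈ forests r m ∧ ∃ t, lv.1[s]? = some t ∧ t.IsSpine k d lv.2}

section SpinedForests

variable {k r s : ℕ} {d : ℕ → ℕ} {m : ℕ →₀ ℕ} {t : PlaneTree} {g l : List PlaneTree} {j c : ℕ}
  {v : List ℕ}

lemma isSpine_zero : t.IsSpine 0 d v ↔ t.IsVertex v := by
  simp [IsSpine]

lemma isVertex_node_cons : (node g).IsVertex (j :: v) ↔ ∃ t, g[j]? = some t ∧ t.IsVertex v := by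
  rw [IsVertex, subtreeAt]
  cases g[j]? <;> simp [IsVertex]

lemma degAt_node_cons (h : g[j]? = some t) (v : List ℕ) : (node g).degAt (j :: v) = t.degAt v := by
  simp [degAt, subtreeAt, h]

lemma isSpine_node_cons :
    (node g).IsSpine (k + 1) d (j :: v) ↔
      g.length = d 0 ∧ ∃ t, g[j]? = some t ∧ t.IsSpine k (fun i => d (i + 1)) v := by
  constructor
  · rintro ⟨hv, hk, hd⟩
    obtain ⟨t, ht, htv⟩ := isVertex_node_cons.1 hv
    refine ⟨hd 0 k.succ_pos, t, ht, htv, by simpa using hk, fun i hi => ?_⟩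
    simpa [degAt_node_cons ht] using hd (i + 1) (by omega)
  · rintro ⟨hg, t, ht, htv, hk, hd⟩
    refine ⟨isVertex_node_cons.2 ⟨t, ht, htv⟩, by simpa using hk, fun i hi => ?_⟩
    cases i with
    | zero => exact hg
    | succ i => simpa [degAt_node_cons ht] using hd i (by omega)

lemma isVertex_node_take_cons :
    (node (l.take c)).IsVertex (j :: v) ↔ j < c ∧ ∃ t, l[j]? = some t ∧ t.IsVertex v := by
  rw [isVertex_node_cons, List.getElem?_take]
  split_ifs with h <;> simp [h]

lemma isSpine_node_take_cons (hc : c ≤ l.length) :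
    (node (l.take c)).IsSpine (k + 1) d (j :: v) ↔
      c = d 0 ∧ j < c ∧ ∃ t, l[j]? = some t ∧ t.IsSpine k (fun i => d (i + 1)) v := by
  rw [isSpine_node_cons, List.length_take_of_le hc, List.getElem?_take]
  split_ifs with h <;> simp [h]

lemma spinedForests_succ_index :
    spinedForests k d (r + 1) m (s + 1) = ⋃ c ∈ m.support,
      (fun p => (graft c p.1, p.2)) ''
        spinedForests k d (r + c) (m - Finsupp.single c 1) (c + s) := by
  ext ⟨l, v⟩
  simp only [spinedForests, mem_forests_succ_iff, Set.mem_ofPred_eq, Set.mem_iUnion,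
    Set.mem_image, Prod.exists, Prod.mk.injEq]
  constructor
  · rintro ⟨⟨c, hc, l', hl', rfl⟩, t, ht, hv⟩
    exact ⟨c, hc, l', v, ⟨hl', t, by simpa [graft] using ht, hv⟩, rfl, rfl⟩
  · rintro ⟨c, hc, l', v, ⟨hl', t, ht, hv⟩, rfl, rfl⟩
    exact ⟨⟨c, hc, l', hl', rfl⟩, t, by simpa [graft] using ht, hv⟩

lemma mem_spinedForests_succ_zero :
    (l, v) ∈ spinedForests (k + 1) d (r + 1) m 0 ↔ m (d 0) ≠ 0 ∧ ∃ j < d 0, ∃ l' v',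
      (l', v') ∈ spinedForests k (fun i => d (i + 1)) (r + d 0) (m - Finsupp.single (d 0) 1) j ∧
        graft (d 0) l' = l ∧ j :: v' = v := by
  simp only [spinedForests, mem_forests_succ_iff, Set.mem_ofPred_eq]
  constructor
  · rintro ⟨⟨c, hc, l', hl', rfl⟩, t, ht, hv⟩
    obtain rfl : t = node (l'.take c) := (Option.some.inj ht).symm
    obtain ⟨j, v', rfl⟩ := List.exists_cons_of_length_pos (l := v) (by have := hv.2.1; omega)
    obtain ⟨rfl, hj, t, ht, hv⟩ := (isSpine_node_take_cons (by rw [hl'.1]; omega)).1 hv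
    exact ⟨Finsupp.mem_support_iff.1 hc, j, hj, l', v', ⟨hl', t, ht, hv⟩, rfl, rfl⟩
  · rintro ⟨hd, j, hj, l', v', ⟨hl', t, ht, hv⟩, rfl, rfl⟩
    exact ⟨⟨d 0, Finsupp.mem_support_iff.2 hd, l', hl', rfl⟩, _, rfl,
      (isSpine_node_take_cons (by rw [hl'.1]; omega)).2 ⟨rfl, hj, t, ht, hv⟩⟩

lemma spinedForests_succ_zero (hd : m (d 0) ≠ 0) :
    spinedForests (k + 1) d (r + 1) m 0 = ⋃ j ∈ Finset.range (d 0),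
      (fun p => (graft (d 0) p.1, j :: p.2)) ''
        spinedForests k (fun i => d (i + 1)) (r + d 0) (m - Finsupp.single (d 0) 1) j := by
  ext ⟨l, v⟩
  simp [mem_spinedForests_succ_zero, hd]

lemma spinedForests_succ_zero_of_eq_zero (hd : m (d 0) = 0) :
    spinedForests (k + 1) d (r + 1) m 0 = ∅ :=
  Set.eq_empty_of_forall_notMem fun _ h => (mem_spinedForests_succ_zero.1 h).1 hd

lemma spinedForests_zero_zero :
    spinedForests 0 d (r + 1) m 0 = (fun l => (l, [])) '' forests (r + 1) m ∪
      ⋃ x ∈ m.support.sigma Finset.range, (fun p => (graft x.1 p.1, x.2 :: p.2)) ''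
        spinedForests 0 d (r + x.1) (m - Finsupp.single x.1 1) x.2 := by
  ext ⟨l, v⟩
  simp only [spinedForests, isSpine_zero, mem_forests_succ_iff, Set.mem_ofPred_eq, Set.mem_union,
    Set.mem_image, Set.mem_iUnion, Finset.mem_sigma, Finset.mem_range, Prod.exists, Prod.mk.injEq,
    Sigma.exists]
  constructor
  · rintro ⟨⟨c, hc, l', hl', rfl⟩, t, ht, hv⟩
    obtain rfl : t = node (l'.take c) := (Option.some.inj ht).symm
    rcases v with _ | ⟨j, v'⟩
    · exact Or.inl ⟨_, ⟨c, hc, l', hl', rfl⟩, rfl, rfl⟩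
    · obtain ⟨hj, t, ht, hv⟩ := isVertex_node_take_cons.1 hv
      exact Or.inr ⟨c, j, ⟨hc, hj⟩, l', v', ⟨hl', t, ht, hv⟩, rfl, rfl⟩
  · rintro (⟨_, ⟨c, hc, l', hl', rfl⟩, rfl, rfl⟩ |
      ⟨c, j, ⟨hc, hj⟩, l', v', ⟨hl', t, ht, hv⟩, rfl, rfl⟩)
    · exact ⟨⟨c, hc, l', hl', rfl⟩, _, rfl, by simp [IsVertex, subtreeAt]⟩
    · exact ⟨⟨c, hc, l', hl', rfl⟩, _, rfl, isVertex_node_take_cons.2 ⟨hj, t, ht, hv⟩⟩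

lemma spinedForests_one :
    spinedForests k d 1 m 0 = (fun tv => ([tv.1], tv.2)) ''
      {tv : PlaneTree × List ℕ | (∀ c, tv.1.degCount c = m c) ∧ tv.1.IsSpine k d tv.2} := by
  ext ⟨l, v⟩
  simp only [spinedForests, forests, Set.mem_ofPred_eq, Set.mem_image, Prod.exists, Prod.mk.injEq]
  constructor
  · rintro ⟨⟨hlen, hdeg⟩, t, ht, hv⟩
    obtain ⟨t', rfl⟩ := List.length_eq_one_iff.1 hlen
    obtain rfl : t' = t := Option.some.inj ht
    exact ⟨t', v, ⟨fun c => by simpa using hdeg c, hv⟩, rfl, rfl⟩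
  · rintro ⟨t, v, ⟨hdeg, hv⟩, rfl, rfl⟩
    exact ⟨⟨rfl, fun c => by simpa using hdeg c⟩, t, rfl, hv⟩

end SpinedForests

section SpineCount

variable {C : Finset ℕ} {M r : ℕ} {m : ℕ →₀ ℕ}

lemma encard_spinedForests_succ_index_mul {k : ℕ} {d : ℕ → ℕ} {s : ℕ} (hC : ∀ i < k, d i ∈ C)
    (hM : m.degree = M) (hr : dsNorm1 m + (r + 1) = M)
    (ih : ∀ c ∈ m.support,
      (spinedForests k d (r + c) (m - Finsupp.single c 1) (c + s)).encard *
          factorialProd (m - Finsupp.single c 1) =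
        ((∏ i ∈ Finset.range k, d i) * (M - 1 - k)! *
          fallingProd C (m - Finsupp.single c 1) k d : ℕ)) :
    (spinedForests k d (r + 1) m (s + 1)).encard * factorialProd m =
      ((∏ i ∈ Finset.range k, d i) * (M - k)! * fallingProd C m k d : ℕ) := by
  set P := ∏ i ∈ Finset.range k, d i
  rw [spinedForests_succ_index, Set.encard_biUnion_image, Finset.sum_mul]
  · calc _ = ∑ c ∈ m.support,
          (((m c - seqCount k d c) * (P * (M - 1 - k)! * fallingProd C m k d) : ℕ) : ℕ∞) :=
          Finset.sum_congr rfl fun c hc => by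
            have hc' := Finsupp.mem_support_iff.1 hc
            rw [mul_factorialProd_eq _ hc', ih c hc]
            norm_cast
            rw [mul_left_comm, mul_fallingProd_sub_single hC hc']
            ring
      _ = _ := by
          norm_cast
          rw [← Finset.sum_mul]
          rcases eq_or_ne (P * fallingProd C m k d) 0 with h0 | h0
          · rcases Nat.mul_eq_zero.1 h0 with h | h <;> simp [h]
          have hle := le_of_fallingProd_ne_zero hC (right_ne_zero_of_mul h0)
          -- a spine that fits in `m` with no leaf on it is shorter than `M`
          have hk := le_dsNorm1_of_seqCount_le hle fun i hi =>
            Finset.prod_ne_zero_iff.1 (left_ne_zero_of_mul h0) i (Finset.mem_range.2 hi)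
          rw [sum_support_sub_seqCount hle, hM, show M - k = M - 1 - k + 1 by omega,
            Nat.factorial_succ]
          ring
  · rintro c - c' - ⟨l, v⟩ ⟨hl, -⟩ ⟨l', v'⟩ ⟨hl', -⟩ h
    obtain ⟨rfl, rfl⟩ := graft_inj_of_mem hl hl' (Prod.mk.inj h).1
    exact ⟨rfl, Prod.ext rfl (Prod.mk.inj h).2⟩

lemma encard_spinedForests_succ_zero_mul {k : ℕ} {d : ℕ → ℕ} (hC : ∀ i < k + 1, d i ∈ C)
    (hd : m (d 0) ≠ 0)
    (ih : ∀ j < d 0,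
      (spinedForests k (fun i => d (i + 1)) (r + d 0) (m - Finsupp.single (d 0) 1) j).encard *
          factorialProd (m - Finsupp.single (d 0) 1) =
        ((∏ i ∈ Finset.range k, d (i + 1)) * (M - 1 - k)! *
          fallingProd C (m - Finsupp.single (d 0) 1) k (fun i => d (i + 1)) : ℕ)) :
    (spinedForests (k + 1) d (r + 1) m 0).encard * factorialProd m =
      ((∏ i ∈ Finset.range (k + 1), d i) * (M - (k + 1))! * fallingProd C m (k + 1) d : ℕ) := by
  rw [spinedForests_succ_zero hd, Set.encard_biUnion_image, Finset.sum_mul,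
    Finset.sum_congr rfl fun j hj => by
      rw [mul_factorialProd_eq _ hd, ih j (Finset.mem_range.1 hj)],
    Finset.sum_const, Finset.card_range, fallingProd_succ (hC 0 k.succ_pos) hd,
    Finset.prod_range_succ', show M - (k + 1) = M - 1 - k by omega]
  · push_cast
    ring
  · rintro j - j' - ⟨l, v⟩ ⟨hl, -⟩ ⟨l', v'⟩ ⟨hl', -⟩ h
    simp only [Prod.mk.injEq, List.cons.injEq] at h
    obtain ⟨-, rfl⟩ := graft_inj_of_mem hl hl' h.1
    exact ⟨h.2.1, Prod.ext rfl h.2.2⟩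

lemma encard_spinedForests_zero_zero_mul {d : ℕ → ℕ} (hM : m.degree = M)
    (hr : dsNorm1 m + (r + 1) = M)
    (ih : ∀ c ∈ m.support, ∀ j < c,
      (spinedForests 0 d (r + c) (m - Finsupp.single c 1) j).encard *
        factorialProd (m - Finsupp.single c 1) = ((M - 1)! : ℕ)) :
    (spinedForests 0 d (r + 1) m 0).encard * factorialProd m = (M ! : ℕ) := by
  have hroot : ((fun l => (l, ([] : List ℕ))) '' forests (r + 1) m).encard * factorialProd m =
      ((r + 1) * (M - 1)! : ℕ) := by
    rw [Function.Injective.encard_image (fun _ _ h => (Prod.mk.inj h).1),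
      encard_forests_mul M hM hr, if_neg (by omega)]
  have hbelow : (⋃ x ∈ m.support.sigma Finset.range, (fun p => (graft x.1 p.1, x.2 :: p.2)) ''
      spinedForests 0 d (r + x.1) (m - Finsupp.single x.1 1) x.2).encard * factorialProd m =
        (dsNorm1 m * (M - 1)! : ℕ) := by
    rw [Set.encard_biUnion_image, Finset.sum_mul, Finset.sum_sigma,
      Finset.sum_congr rfl fun c hc => Finset.sum_congr rfl fun j hj => by
        rw [mul_factorialProd_eq _ (Finsupp.mem_support_iff.1 hc),
          ih c hc j (Finset.mem_range.1 hj)]]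
    · simp only [Finset.sum_const, Finset.card_range, nsmul_eq_mul]
      norm_cast
      rw [dsNorm1, Finsupp.sum, Finset.sum_mul]
      exact Finset.sum_congr rfl fun c _ => by ring
    · rintro ⟨c, j⟩ - ⟨c', j'⟩ - ⟨l, v⟩ ⟨hl, -⟩ ⟨l', v'⟩ ⟨hl', -⟩ h
      simp only [Prod.mk.injEq, List.cons.injEq] at h
      obtain ⟨rfl, rfl⟩ := graft_inj_of_mem hl hl' h.1
      obtain ⟨rfl, rfl⟩ := h.2
      exact ⟨rfl, rfl⟩
  rw [spinedForests_zero_zero, Set.encard_union_eq, add_mul, hroot, hbelow]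
  · norm_cast
    rw [← add_mul, show r + 1 + dsNorm1 m = M by omega, Nat.mul_factorial_pred (by omega)]
  · refine Set.disjoint_left.2 ?_
    rintro _ ⟨l, -, rfl⟩ h
    simp only [Set.mem_iUnion, Set.mem_image, Prod.mk.injEq] at h
    obtain ⟨_, -, _, -, h⟩ := h
    exact List.cons_ne_nil _ _ h.2

end SpineCount

theorem encard_spinedForests_mul (C : Finset ℕ) (M : ℕ) :
    ∀ {k : ℕ} {d : ℕ → ℕ} {r : ℕ} {m : ℕ →₀ ℕ} {s : ℕ}, (∀ i < k, d i ∈ C) → m.degree = M →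
      dsNorm1 m + r = M → s < r →
      (spinedForests k d r m s).encard * factorialProd m =
        ((∏ i ∈ Finset.range k, d i) * (M - k)! * fallingProd C m k d : ℕ) := by
  induction M using Nat.strong_induction_on with
  | _ M ih =>
  rintro k d (_ | r) m s hC hM hr hs
  · omega
  have ih' : ∀ {k d c s}, (∀ i < k, d i ∈ C) → m c ≠ 0 → s < r + c →
      (spinedForests k d (r + c) (m - Finsupp.single c 1) s).encard *
          factorialProd (m - Finsupp.single c 1) =
        ((∏ i ∈ Finset.range k, d i) * (M - 1 - k)! *
          fallingProd C (m - Finsupp.single c 1) k d : ℕ) := fun hC hc hs =>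
    ih (M - 1) (by omega) hC (by have := Finsupp.degree_sub_single_one hc; omega)
      (by have := dsNorm1_sub_single_one hc; omega) hs
  rcases s with _ | s
  · rcases k with _ | k
    · simpa [fallingProd, seqCount] using encard_spinedForests_zero_zero_mul hM hr
        fun c hc j hj => by
          simpa [fallingProd, seqCount] using
            ih' (k := 0) (d := d) (by simp) (Finsupp.mem_support_iff.1 hc) (by omega)
    · by_cases hd : m (d 0) = 0
      · rw [spinedForests_succ_zero_of_eq_zero hd, fallingProd_succ_of_eq_zero (hC 0 k.succ_pos) hd]
        simp
      · exact encard_spinedForests_succ_zero_mul hC hd fun j hj =>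
          ih' (fun i hi => hC (i + 1) (by omega)) hd (by omega)
  · exact encard_spinedForests_succ_index_mul hC hM hr fun c hc =>
      ih' hC (Finsupp.mem_support_iff.1 hc) (by omega)

lemma card_markedTrees_spine (n : ℕ →₀ ℕ) (k : ℕ) (d : ℕ → ℕ) :
    Nat.card {tv : PlaneTree × List ℕ // tv ∈ markedTrees n ∧ k ≤ tv.2.length ∧
      ∀ i < k, tv.1.degAt (tv.2.take i) = d i} = (spinedForests k d 1 n 0).ncard := by
  rw [spinedForests_one, Set.ncard_image_of_injective _ fun _ _ h => by
    simpa [Prod.ext_iff] using h]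
  exact (Nat.card_coe_set_eq _).trans (by simp [markedTrees, IsSpine, and_assoc]; rfl)

lemma card_markedTrees (n : ℕ →₀ ℕ) (d : ℕ → ℕ) :
    Nat.card {tv : PlaneTree × List ℕ // tv ∈ markedTrees n} = (spinedForests 0 d 1 n 0).ncard :=
  (Nat.card_congr (Equiv.subtypeEquivRight fun _ => by simp)).trans (card_markedTrees_spine n 0 d)

theorem ncard_spinedForests_one_mul {C : Finset ℕ} {N k : ℕ} {d : ℕ → ℕ} {n : ℕ →₀ ℕ}
    (hC : ∀ i < k, d i ∈ C) (hN : n.degree = N) (hn : dsNorm1 n + 1 = N) :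
    (spinedForests k d 1 n 0).ncard * factorialProd n =
      (∏ i ∈ Finset.range k, d i) * (N - k)! * fallingProd C n k d :=
  Set.ncard_mul_eq_of_encard_mul_eq (factorialProd_ne_zero n)
    (encard_spinedForests_mul C N hC hN hn Nat.one_pos)

end PlaneTree

/-- **Corollary (spinal degree sequence law).** With `n`, `N`, `k`, `d` as in
the spine-counting proposition, if `(T,V)` is uniform on `𝒯_n^•` then
`P((deg_T(V^0),…,deg_T(V^{k−1})) = d, |V| ≥ k)
  = (1/(N)_k) ∏_{i<k} d_i ∏_c (n(c))_{w(d,c)}`,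
where `(m)_b` is the falling factorial. -/
theorem spinal_degree_sequence_law (n : ℕ →₀ ℕ) (N : ℕ)
    (hsum : n.sum (fun _ m => m) = N) (hsum1 : n.sum (fun c m => c * m) + 1 = N)
    (k : ℕ) (d : ℕ → ℕ)
    (hw : ∀ c, ((Finset.range k).filter fun i => d i = c).card ≤ n c) :
    (Nat.card {tv : PlaneTree × List ℕ // tv ∈ markedTrees n ∧ k ≤ tv.2.length ∧
        ∀ i < k, tv.1.degAt (tv.2.take i) = d i} : ℝ) /
      (Nat.card {tv : PlaneTree × List ℕ // tv ∈ markedTrees n} : ℝ) =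
    ((∏ i ∈ Finset.range k, (d i : ℝ)) *
        ∏ c ∈ n.support,
          ((n c).descFactorial (((Finset.range k).filter fun i => d i = c).card) : ℝ)) /
      (N.descFactorial k : ℝ) := by
  have hN : n.degree = N := hsum
  have hspine := PlaneTree.ncard_spinedForests_one_mul (mem_support_of_seqCount_le hw) hN hsum1
  have hall := PlaneTree.ncard_spinedForests_one_mul (k := 0) (d := d) (C := ∅) (by simp) hN hsum1
  simp only [Finset.range_zero, Finset.prod_empty, one_mul, Nat.sub_zero, fallingProd,
    mul_one] at hall
  have hkN : k ≤ N := hN ▸ le_degree_of_seqCount_le hw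
  have hall0 : (PlaneTree.spinedForests 0 d 1 n 0).ncard ≠ 0 := by
    rintro h
    rw [h, zero_mul] at hall
    exact N.factorial_ne_zero hall.symm
  have key : (PlaneTree.spinedForests k d 1 n 0).ncard * N.descFactorial k =
      (∏ i ∈ Finset.range k, d i) * fallingProd n.support n k d *
        (PlaneTree.spinedForests 0 d 1 n 0).ncard := by
    refine Nat.eq_of_mul_eq_mul_right (Nat.pos_of_ne_zero (factorialProd_ne_zero n)) ?_
    calc _ = (∏ i ∈ Finset.range k, d i) * ((N - k)! * N.descFactorial k) *
          fallingProd n.support n k d := by rw [← mul_assoc, mul_right_comm, hspine]; ring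
      _ = _ := by rw [Nat.factorial_mul_descFactorial hkN, ← hall]; ring
  rw [PlaneTree.card_markedTrees_spine, PlaneTree.card_markedTrees n d,
    div_eq_div_iff (by exact_mod_cast hall0)
      (by exact_mod_cast (Nat.descFactorial_pos.2 hkN).ne')]
  unfold fallingProd seqCount at key
  exact_mod_cast key
end

section
/- Let d = (d_1,...,d_n) be non-negative integers, write d_max = max_i d_i and assume n ≥ 2; set p_i = d_i/(2(n−1)) for each i, p_max = d_max/(2(n−1)), v = Σ_{i : d_i ≥ 2} d_i²/(n−1), and g(t,d) = ∏_{i : d_i ≥ 2}(1 + p_i·t)·e^{−p_i·t}. Then for all 0 ≤ t < 1/p_max = 2(n−1)/d_max: (i) log g(t,d) = Σ_{k≥2} ((−1)^{k+1}/k)·Σ_{i : d_i ≥ 2}(d_i·t/(2(n−1)))^k, and (ii) |log g(t,d) + v·t²/(8(n−1))| ≤ (d_max·t/(6(n−1) − 3·d_max·t)) · v·t²/(4(n−1)). -/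
open scoped ENNReal NNReal BigOperators
open MeasureTheory ProbabilityTheory

/-- `g(t,d) = ∏_{i : d_i ≥ 2} (1 + p_i t) e^{−p_i t}` where `p_i = d_i/(2(n−1))`. -/
noncomputable def gFun (n : ℕ) (d : Fin n → ℕ) (t : ℝ) : ℝ :=
  ∏ i ∈ Finset.univ.filter (fun i => 2 ≤ d i),
    (1 + (d i : ℝ) / (2 * ((n : ℝ) - 1)) * t) *
      Real.exp (-((d i : ℝ) / (2 * ((n : ℝ) - 1)) * t))

/-- `v = Σ_{i : d_i ≥ 2} d_i² / (n−1)`. -/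
noncomputable def vStat (n : ℕ) (d : Fin n → ℕ) : ℝ :=
  ∑ i ∈ Finset.univ.filter (fun i => 2 ≤ d i), (d i : ℝ) ^ 2 / ((n : ℝ) - 1)

/-!
Taking logarithms turns `g` into `∑ᵢ (log (1 + xᵢ) - xᵢ)` with `xᵢ = dᵢ t / (2(n - 1)) ∈ [0, 1)`,
so (i) is the Mercator series of `log (1 + x)`, summed termwise. For (ii), the terms of degree
at least `3` of that series have absolute values at most `|x|³/3 · |x|^m`, whence
`|log (1 + x) - x + x²/2| ≤ |x|³ / (3(1 - |x|))`; the factor `|x| / (3(1 - |x|))` increases with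
`|x|`, so it is at most its value at `d_max t / (2(n - 1))`, which is the prefactor in (ii).
-/

namespace Real

theorem hasSum_log_one_add_sub_self {x : ℝ} (h : |x| < 1) :
    HasSum (fun m : ℕ => (-1 : ℝ) ^ (m + 1) / ((m : ℝ) + 2) * x ^ (m + 2)) (log (1 + x) - x) := by
  have hlog := (hasSum_pow_div_log_of_abs_lt_one (x := -x) (by rwa [abs_neg])).neg
  rw [sub_neg_eq_add, neg_neg] at hlog
  have hterm : (fun m : ℕ => (-1 : ℝ) ^ (m + 1) / ((m : ℝ) + 2) * x ^ (m + 2)) =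
      fun m => -((-x) ^ (m + 1 + 1) / (((m + 1 : ℕ) : ℝ) + 1)) := by
    funext m
    push_cast
    rw [neg_pow]
    ring
  have hval :
      log (1 + x) - x = log (1 + x) - ∑ m ∈ Finset.range 1, -((-x) ^ (m + 1) / (m + 1)) := by
    simp
  rw [hterm, hval]
  exact (hasSum_nat_add_iff' 1).mpr hlog

theorem abs_log_one_add_sub_self_add_sq_div_two_le {x : ℝ} (h : |x| < 1) :
    |log (1 + x) - x + x ^ 2 / 2| ≤ |x| ^ 3 / (3 * (1 - |x|)) := by
  have htail := (hasSum_nat_add_iff' 1).mpr (hasSum_log_one_add_sub_self h)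
  have hgeom : HasSum (fun m : ℕ => |x| ^ 3 / 3 * |x| ^ m) (|x| ^ 3 / 3 * (1 - |x|)⁻¹) :=
    (hasSum_geometric_of_lt_one (abs_nonneg x) h).mul_left _
  convert htail.norm_le_of_bounded hgeom fun m => ?_ using 1
  · norm_num [div_eq_inv_mul]
  · field_simp
  · have h3 : (3 : ℝ) ≤ ((m + 1 : ℕ) : ℝ) + 2 := by push_cast; linarith [m.cast_nonneg (α := ℝ)]
    simp only [norm_mul, norm_div, norm_pow, norm_neg, norm_one, one_pow, Real.norm_eq_abs]
    rw [abs_of_pos (by positivity)]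
    calc 1 / (((m + 1 : ℕ) : ℝ) + 2) * |x| ^ (m + 1 + 2) ≤ 1 / 3 * |x| ^ (m + 1 + 2) := by
          gcongr
      _ = |x| ^ 3 / 3 * |x| ^ m := by ring

theorem log_prod_one_add_mul_exp_neg {ι : Type*} {s : Finset ι} {x : ι → ℝ}
    (hx : ∀ i ∈ s, -1 < x i) :
    log (∏ i ∈ s, (1 + x i) * exp (-x i)) = ∑ i ∈ s, (log (1 + x i) - x i) := by
  have hpos : ∀ i ∈ s, 0 < 1 + x i := fun i hi => by linarith [hx i hi]
  rw [log_prod fun i hi => (mul_pos (hpos i hi) (exp_pos _)).ne']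
  refine Finset.sum_congr rfl fun i hi => ?_
  rw [log_mul (hpos i hi).ne' (exp_pos _).ne', log_exp, sub_eq_add_neg]

variable {ι : Type*} {s : Finset ι} {x : ι → ℝ}

theorem hasSum_sum_log_one_add_sub_self (hx : ∀ i ∈ s, |x i| < 1) :
    HasSum (fun m : ℕ => (-1 : ℝ) ^ (m + 1) / ((m : ℝ) + 2) * ∑ i ∈ s, x i ^ (m + 2))
      (∑ i ∈ s, (log (1 + x i) - x i)) := by
  simp only [Finset.mul_sum]
  exact hasSum_sum fun i hi => hasSum_log_one_add_sub_self (hx i hi)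

theorem abs_sum_log_one_add_sub_self_add_sq_div_two_le {X : ℝ} (hx : ∀ i ∈ s, |x i| ≤ X)
    (hX : X < 1) :
    |∑ i ∈ s, (log (1 + x i) - x i) + ∑ i ∈ s, x i ^ 2 / 2| ≤
      X / (3 * (1 - X)) * ∑ i ∈ s, x i ^ 2 := by
  rw [← Finset.sum_add_distrib, Finset.mul_sum]
  refine (Finset.abs_sum_le_sum_abs _ _).trans (Finset.sum_le_sum fun i hi => ?_)
  have hxi : |x i| < 1 := (hx i hi).trans_lt hX
  have hX0 : 0 ≤ X := (abs_nonneg _).trans (hx i hi)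
  calc |log (1 + x i) - x i + x i ^ 2 / 2| ≤ |x i| ^ 3 / (3 * (1 - |x i|)) :=
        abs_log_one_add_sub_self_add_sq_div_two_le hxi
    _ = |x i| / (3 * (1 - |x i|)) * x i ^ 2 := by rw [← sq_abs (x i)]; ring
    _ ≤ X / (3 * (1 - X)) * x i ^ 2 := by
        have hxiX := hx i hi
        gcongr

end Real

theorem vStat_mul_sq_div (n : ℕ) (d : Fin n → ℕ) (t : ℝ) :
    vStat n d * t ^ 2 / (4 * ((n : ℝ) - 1)) =
      ∑ i ∈ Finset.univ.filter (fun i => 2 ≤ d i), ((d i : ℝ) * t / (2 * ((n : ℝ) - 1))) ^ 2 := by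
  rw [vStat, Finset.sum_mul, Finset.sum_div]
  generalize (n : ℝ) - 1 = m
  exact Finset.sum_congr rfl fun i _ => by ring

/-- The hypothesis `t * d_max < 2 (n - 1)` is `t < 1 / p_max` written without division, so that it
also covers `d_max = 0`, where `1 / p_max = ∞`. -/
theorem log_g_expansion_general (n : ℕ) (d : Fin n → ℕ) :
    ∀ t : ℝ, 0 ≤ t → t * ((Finset.univ.sup d : ℕ) : ℝ) < 2 * ((n : ℝ) - 1) →
      Real.log (gFun n d t) =
        (∑' m : ℕ, ((-1 : ℝ) ^ (m + 1) / ((m : ℝ) + 2)) *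
          ∑ i ∈ Finset.univ.filter (fun i => 2 ≤ d i),
            ((d i : ℝ) * t / (2 * ((n : ℝ) - 1))) ^ (m + 2)) ∧
      |Real.log (gFun n d t) + vStat n d * t ^ 2 / (8 * ((n : ℝ) - 1))| ≤
        ((Finset.univ.sup d : ℕ) : ℝ) * t /
            (6 * ((n : ℝ) - 1) - 3 * ((Finset.univ.sup d : ℕ) : ℝ) * t) *
          (vStat n d * t ^ 2 / (4 * ((n : ℝ) - 1))) := by
  intro t ht htD
  set D : ℝ := ((Finset.univ.sup d : ℕ) : ℝ)
  set N : ℝ := 2 * ((n : ℝ) - 1) with hN_def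
  have hN : 0 < N := (mul_nonneg ht (Nat.cast_nonneg _)).trans_lt htD
  have hx : ∀ i, |(d i : ℝ) * t / N| ≤ D * t / N := fun i => by
    rw [abs_of_nonneg (by positivity)]
    gcongr
    exact Nat.cast_le.mpr (Finset.le_sup (f := d) (Finset.mem_univ i))
  have hX : D * t / N < 1 := by rw [div_lt_one hN, mul_comm]; exact htD
  have hlog : Real.log (gFun n d t) =
      ∑ i ∈ Finset.univ.filter (fun i => 2 ≤ d i),
        (Real.log (1 + (d i : ℝ) * t / N) - (d i : ℝ) * t / N) := by
    rw [← Real.log_prod_one_add_mul_exp_neg fun i _ => neg_one_lt_zero.trans_le (by positivity)]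
    simp only [gFun, div_mul_eq_mul_div]
    rfl
  have hK : D * t / (6 * ((n : ℝ) - 1) - 3 * D * t) = D * t / N / (3 * (1 - D * t / N)) := by
    rw [div_div, mul_left_comm, mul_one_sub, mul_div_cancel₀ _ hN.ne', hN_def]
    ring
  have hv : vStat n d * t ^ 2 / (8 * ((n : ℝ) - 1)) =
      ∑ i ∈ Finset.univ.filter (fun i => 2 ≤ d i), ((d i : ℝ) * t / N) ^ 2 / 2 := by
    rw [← Finset.sum_div, ← vStat_mul_sq_div, div_div]
    ring
  constructor
  · rw [hlog]
    exact (Real.hasSum_sum_log_one_add_sub_self fun i _ => (hx i).trans_lt hX).tsum_eq.symm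
  · rw [hlog, hv, hK, vStat_mul_sq_div]
    exact Real.abs_sum_log_one_add_sub_self_add_sq_div_two_le (fun i _ => hx i) hX

/-- **Lemma (expansion of `log g`).** For `0 ≤ t < 1/p_max = 2(n−1)/d_max`
(expressed multiplicatively as `t·d_max < 2(n−1)`, which also covers the case
`d_max = 0`, i.e. `1/p_max = ∞`):
`log g(t,d) = Σ_{k≥2} ((−1)^{k+1}/k) Σ_{i : d_i ≥ 2} (d_i t/(2(n−1)))^k` and
`|log g(t,d) + v t²/(8(n−1))| ≤ (d_max t/(6(n−1) − 3 d_max t)) · v t²/(4(n−1))`. -/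
theorem log_g_expansion (n : ℕ) (hn : 2 ≤ n) (d : Fin n → ℕ) :
    ∀ t : ℝ, 0 ≤ t → t * ((Finset.univ.sup d : ℕ) : ℝ) < 2 * ((n : ℝ) - 1) →
      Real.log (gFun n d t) =
        (∑' m : ℕ, ((-1 : ℝ) ^ (m + 1) / ((m : ℝ) + 2)) *
          ∑ i ∈ Finset.univ.filter (fun i => 2 ≤ d i),
            ((d i : ℝ) * t / (2 * ((n : ℝ) - 1))) ^ (m + 2)) ∧
      |Real.log (gFun n d t) + vStat n d * t ^ 2 / (8 * ((n : ℝ) - 1))| ≤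
        ((Finset.univ.sup d : ℕ) : ℝ) * t /
            (6 * ((n : ℝ) - 1) - 3 * ((Finset.univ.sup d : ℕ) : ℝ) * t) *
          (vStat n d * t ^ 2 / (4 * ((n : ℝ) - 1))) :=
  log_g_expansion_general n d
end

section
/- Let d = (d_1,...,d_n) be non-negative integers with n ≥ 2 and d_max = max_i d_i ≥ 1; set p_i = d_i/(2(n−1)), v = Σ_{i : d_i ≥ 2} d_i²/(n−1), and g(t,d) = ∏_{i : d_i ≥ 2}(1 + p_i·t)·e^{−p_i·t}. Then for all 0 ≤ t ≤ (n−1)/d_max, g(t,d) ≤ exp(−v·t²/(24(n−1))). -/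
open scoped ENNReal NNReal BigOperators
open MeasureTheory ProbabilityTheory

/-!
Each factor is `(1 + x) e^{-x}` with `x = p_i t ∈ [0, 1]`, and on `[0, 1]` this is at most
`e^{-x²/6}`: with `y = x - x²/6 ≥ 5x/6`, the bound `1 + y + y²/2 ≤ e^y` already exceeds `1 + x`.
Multiplying the factor bounds turns the product into `exp (-Σ p_i² t² / 6)`, which is the claim.
-/

open Real

lemma one_add_mul_exp_neg_le_exp_neg_sq_div_six {x : ℝ} (hx₀ : 0 ≤ x) (hx₁ : x ≤ 1) :
    (1 + x) * exp (-x) ≤ exp (-(x ^ 2 / 6)) := by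
  have hy : 0 ≤ x - x ^ 2 / 6 := by nlinarith
  have h : 1 + x ≤ exp (x - x ^ 2 / 6) := by
    nlinarith [quadratic_le_exp_of_nonneg hy]
  calc (1 + x) * exp (-x) ≤ exp (x - x ^ 2 / 6) * exp (-x) :=
        mul_le_mul_of_nonneg_right h (exp_pos _).le
    _ = exp (-(x ^ 2 / 6)) := by rw [← exp_add]; ring_nf

lemma prod_one_add_mul_exp_neg_le_exp {ι : Type*} (s : Finset ι) (x : ι → ℝ)
    (hx : ∀ i ∈ s, 0 ≤ x i ∧ x i ≤ 1) :
    ∏ i ∈ s, (1 + x i) * exp (-x i) ≤ exp (-((∑ i ∈ s, x i ^ 2) / 6)) := by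
  rw [Finset.sum_div, ← Finset.sum_neg_distrib, exp_sum]
  refine Finset.prod_le_prod (fun i hi => ?_) fun i hi =>
    one_add_mul_exp_neg_le_exp_neg_sq_div_six (hx i hi).1 (hx i hi).2
  have := (hx i hi).1
  positivity

theorem g_upper_bound_general (n : ℕ) (hn : 2 ≤ n) (d : Fin n → ℕ) :
    ∀ t : ℝ, 0 ≤ t → t ≤ ((n : ℝ) - 1) / ((Finset.univ.sup d : ℕ) : ℝ) →
      gFun n d t ≤ Real.exp (-(vStat n d * t ^ 2 / (24 * ((n : ℝ) - 1)))) := by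
  intro t ht htD
  have hN : (0 : ℝ) < n - 1 := by
    have : (2 : ℝ) ≤ n := by exact_mod_cast hn
    linarith
  have hp : ∀ i ∈ Finset.univ.filter (fun i => 2 ≤ d i),
      0 ≤ (d i : ℝ) / (2 * ((n : ℝ) - 1)) * t ∧ (d i : ℝ) / (2 * ((n : ℝ) - 1)) * t ≤ 1 := by
    intro i hi
    have hdi : (2 : ℝ) ≤ d i := by exact_mod_cast (Finset.mem_filter.mp hi).2
    have hdiD : (d i : ℝ) ≤ (Finset.univ.sup d : ℕ) := by
      exact_mod_cast Finset.le_sup (Finset.mem_univ i)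
    have hdit : d i * t ≤ (n : ℝ) - 1 := by
      rw [le_div_iff₀ (by linarith)] at htD
      nlinarith
    refine ⟨by positivity, ?_⟩
    rw [div_mul_eq_mul_div, div_le_one (by positivity)]
    linarith
  have hsum : (∑ i ∈ Finset.univ.filter (fun i => 2 ≤ d i),
      ((d i : ℝ) / (2 * ((n : ℝ) - 1)) * t) ^ 2) / 6 = vStat n d * t ^ 2 / (24 * ((n : ℝ) - 1)) := by
    rw [vStat, Finset.sum_mul, Finset.sum_div, Finset.sum_div]
    refine Finset.sum_congr rfl fun i _ => ?_
    field_simp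
    ring
  exact (prod_one_add_mul_exp_neg_le_exp _ _ hp).trans_eq (by rw [hsum])

/-- **Corollary (Gaussian-type bound on `g`).** For `0 ≤ t ≤ (n−1)/d_max`,
`g(t,d) ≤ exp(−v t²/(24(n−1)))`. -/
theorem g_upper_bound (n : ℕ) (hn : 2 ≤ n) (d : Fin n → ℕ)
    (hd : 1 ≤ Finset.univ.sup d) :
    ∀ t : ℝ, 0 ≤ t → t ≤ ((n : ℝ) - 1) / ((Finset.univ.sup d : ℕ) : ℝ) →
      gFun n d t ≤ Real.exp (-(vStat n d * t ^ 2 / (24 * ((n : ℝ) - 1)))) :=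
  g_upper_bound_general n hn d
end
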